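/- arXiv:2401.09151 — 2 statements merged into one kernel-verified Lean document; each statement's English description precedes it below -/
import Mathlib

section
/- Let k be a commutative ring and let H_1, H_2 be coaugmented coalgebras over k. Equip H_1 ⊗ H_2 with the tensor product coalgebra structure and the coaugmentation η(1) = 1_{H_1} ⊗ 1_{H_2}. If a ∈ P_n(H_1) and b ∈ P_m(H_2), then a ⊗ b ∈ P_{n+m}(H_1 ⊗ H_2). -/
/-! Write `p = η ∘ ε` and `e = id − p` on each factor. On `H₁ ⊗ H₂` the map `e` equals
`e ⊗ e + p ⊗ e + e ⊗ p`, so `δ^N (a ⊗ b)` expands into a sum over words of length `N` in these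
three letters, each term being the interleaving of a word in `e, p` applied to `Δ^{(N)} a` with
one applied to `Δ^{(N)} b`. Every letter carries an `e` on at least one side, so for
`N = n + m + 1` either the `H₁`-word has more than `n` letters `e` or the `H₂`-word has more than
`m`. By counitality the `p` letters can be stripped, so a word with `k` letters `e` applied to
`Δ^{(N)} x` factors through `δ^k x`; and since `1_H` is grouplike, `δ^{j+2}` factors through
`δ^{j+1}`, so the filtration is increasing and `δ^k` kills `P_n` for every `k > n`. -/

open TensorProduct

noncomputable section

universe u

variable (R : Type u) [CommRing R]

/-- `Tpow R H n` is the `n`-th tensor power `H^{⊗n}` of the `R`-module `H`,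
defined recursively by `H^{⊗0} = R` and `H^{⊗(n+1)} = H ⊗ H^{⊗n}`. -/
def Tpow (H : Type u) [AddCommGroup H] [Module R H] : ℕ → ModuleCat.{u} R
  | 0 => ModuleCat.of R R
  | n + 1 => ModuleCat.of R (H ⊗[R] (Tpow H n))

variable {R}
variable {H : Type u} [AddCommGroup H] [Module R H]

/-- The iterated comultiplication `Δ^{(n)} : H → H^{⊗n}`:
`Δ^{(0)} = ε`, `Δ^{(1)} = id` (as the canonical map `H ≅ H ⊗ R`), and
`Δ^{(n+1)} = (Δ ⊗ id^{⊗(n−1)}) ∘ Δ^{(n)}`. -/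
def iterComul (Δc : H →ₗ[R] H ⊗[R] H) (εc : H →ₗ[R] R) : (n : ℕ) → (H →ₗ[R] Tpow R H n)
  | 0 => εc
  | 1 => (TensorProduct.rid R H).symm.toLinearMap
  | n + 2 =>
      (TensorProduct.assoc R H H (Tpow R H n)).toLinearMap
        ∘ₗ (LinearMap.rTensor (Tpow R H n) Δc)
        ∘ₗ (iterComul Δc εc (n + 1))

/-- The `n`-fold tensor power `e^{⊗n} : H^{⊗n} → H^{⊗n}` of a linear endomorphism `e`. -/
def mapPow (e : H →ₗ[R] H) : (n : ℕ) → (Tpow R H n →ₗ[R] Tpow R H n)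
  | 0 => LinearMap.id
  | n + 1 => TensorProduct.map e (mapPow e n)

/-- `e_H := id − η ∘ ε`, where `η : R → H` is the coaugmentation `r ↦ r • u` sending `1` to `u`. -/
def eAug (εc : H →ₗ[R] R) (u : H) : H →ₗ[R] H :=
  LinearMap.id - (LinearMap.toSpanSingleton R H u) ∘ₗ εc

/-- `δ^n := e_H^{⊗n} ∘ Δ^{(n)} : H → H^{⊗n}`. -/
def deltaPow (Δc : H →ₗ[R] H ⊗[R] H) (εc : H →ₗ[R] R) (u : H) (n : ℕ) :
    H →ₗ[R] Tpow R H n :=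
  (mapPow (eAug εc u) n) ∘ₗ (iterComul Δc εc n)

/-- The `n`-th term `P_n(H) := ker (δ^{n+1})` of the coradical filtration. -/
def corad (Δc : H →ₗ[R] H ⊗[R] H) (εc : H →ₗ[R] R) (u : H) (n : ℕ) : Submodule R H :=
  LinearMap.ker (deltaPow Δc εc u (n + 1))

section TensorCoalgebra

variable {R : Type u} [CommRing R]
variable {H₁ H₂ : Type u} [AddCommGroup H₁] [Module R H₁] [AddCommGroup H₂] [Module R H₂]

/-- The comultiplication `(id ⊗ swap ⊗ id) ∘ (Δ₁ ⊗ Δ₂)` of the tensor product coalgebra. -/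
def tensorComul (Δ₁ : H₁ →ₗ[R] H₁ ⊗[R] H₁) (Δ₂ : H₂ →ₗ[R] H₂ ⊗[R] H₂) :
    (H₁ ⊗[R] H₂) →ₗ[R] (H₁ ⊗[R] H₂) ⊗[R] (H₁ ⊗[R] H₂) :=
  (TensorProduct.tensorTensorTensorComm R H₁ H₁ H₂ H₂).toLinearMap
    ∘ₗ TensorProduct.map Δ₁ Δ₂

/-- The counit `ε₁ ⊗ ε₂` of the tensor product coalgebra. -/
def tensorCounit (ε₁ : H₁ →ₗ[R] R) (ε₂ : H₂ →ₗ[R] R) : (H₁ ⊗[R] H₂) →ₗ[R] R :=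
  (TensorProduct.lid R R).toLinearMap ∘ₗ TensorProduct.map ε₁ ε₂

end TensorCoalgebra

open Coalgebra Finset

section Words

variable {ι : Type*}

def mapWord (c : ι → Module.End R H) : (N : ℕ) → (Fin N → ι) → Module.End R (Tpow R H N)
  | 0, _ => LinearMap.id
  | N + 1, g => map (c (g 0)) (mapWord c N (Fin.tail g))

theorem mapWord_cons (c : ι → Module.End R H) (N : ℕ) (i : ι) (g : Fin N → ι) :
    mapWord c (N + 1) (Fin.cons i g) = map (c i) (mapWord c N g) := by
  rw [mapWord, Fin.cons_zero, Fin.tail_cons]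

theorem mapWord_comp {κ : Type*} (c : ι → Module.End R H) (φ : κ → ι) :
    ∀ (N : ℕ) (g : Fin N → κ), mapWord (fun k => c (φ k)) N g = mapWord c N (fun i => φ (g i))
  | 0, _ => rfl
  | N + 1, g => by
    rw [mapWord, mapWord, mapWord_comp c φ N]
    rfl

theorem TensorProduct.map_sum_sum {κ : Type*} [Fintype ι] [Fintype κ]
    {M M' N N' : Type*} [AddCommGroup M] [Module R M] [AddCommGroup M'] [Module R M']
    [AddCommGroup N] [Module R N] [AddCommGroup N'] [Module R N']
    (f : ι → M →ₗ[R] M') (g : κ → N →ₗ[R] N') :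
    map (∑ i, f i) (∑ j, g j) = ∑ i, ∑ j, map (f i) (g j) := by
  simp only [← mapBilinear_apply, map_sum, LinearMap.sum_apply]
  exact Finset.sum_comm

theorem mapPow_sum [Fintype ι] (c : ι → Module.End R H) :
    ∀ N, mapPow (∑ i, c i) N = ∑ g : Fin N → ι, mapWord c N g
  | 0 => by simp [mapPow, mapWord]
  | N + 1 => by
    rw [← (Fin.consEquiv fun _ => ι).sum_comp, Fintype.sum_prod_type]
    simp only [Fin.consEquiv, Equiv.coe_fn_mk, mapWord_cons]
    -- `Tpow R H (N + 1)` is `H ⊗ Tpow R H N` only after unfolding, hence the `change`s throughout.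
    change map (∑ i, c i) (mapPow _ N) = _
    rw [mapPow_sum c N]
    exact TensorProduct.map_sum_sum c (mapWord c N)

end Words

section Coradical

def augSplit (ε : H →ₗ[R] R) (u : H) : Bool → Module.End R H
  | true => eAug ε u
  | false => LinearMap.toSpanSingleton R H u ∘ₗ ε

theorem eAug_apply_self {ε : H →ₗ[R] R} {u : H} (h : ε u = 1) : eAug ε u u = 0 := by
  simp [eAug, h]

variable [Coalgebra R H]

theorem comul_coassoc_lTensor {M : Type*} [AddCommGroup M] [Module R M] (f : H →ₗ[R] M) :
    (TensorProduct.assoc R H H M).toLinearMap ∘ₗ (comul (R := R) (A := H)).rTensor M ∘ₗ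
        f.lTensor H ∘ₗ comul =
      (f.lTensor H ∘ₗ comul).lTensor H ∘ₗ comul := by
  simp only [coassoc_simps]

theorem map_toSpanSingleton_counit_comp_comul {M : Type*} [AddCommGroup M] [Module R M]
    (u : H) (f : H →ₗ[R] M) :
    map (LinearMap.toSpanSingleton R H u ∘ₗ counit) f ∘ₗ comul = mk R H M u ∘ₗ f := by
  rw [← LinearMap.comp_id f, map_comp, LinearMap.comp_id, LinearMap.comp_assoc,
    ← LinearMap.rTensor_def, rTensor_counit_comp_comul]
  ext x
  simp

theorem iterComul_succ : ∀ N : ℕ,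
    iterComul (comul : H →ₗ[R] H ⊗[R] H) counit (N + 1) =
      (iterComul comul counit N).lTensor H ∘ₗ comul
  | 0 => by
    change (TensorProduct.rid R H).symm.toLinearMap = counit.lTensor H ∘ₗ comul
    rw [lTensor_counit_comp_comul]
    ext
    simp
  | N + 1 => by
    change (TensorProduct.assoc R H H (Tpow R H N)).toLinearMap ∘ₗ comul.rTensor _ ∘ₗ
      iterComul comul counit (N + 1) = _
    rw [iterComul_succ N]
    exact comul_coassoc_lTensor _

theorem deltaPow_succ (u : H) (N : ℕ) :
    deltaPow (comul : H →ₗ[R] H ⊗[R] H) counit u (N + 1) =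
      map (eAug counit u) (deltaPow comul counit u N) ∘ₗ comul := by
  change map (eAug counit u) (mapPow (eAug counit u) N) ∘ₗ iterComul comul counit (N + 1) = _
  rw [iterComul_succ, ← LinearMap.comp_assoc, LinearMap.map_comp_lTensor]
  rfl

-- Counitality absorbs every `η ∘ ε` letter, so only the `e` letters survive.
theorem exists_mapWord_comp_iterComul_eq_comp_deltaPow (u : H) : ∀ (N : ℕ) (w : Fin N → Bool),
    ∃ J : Tpow R H #{i | w i = true} →ₗ[R] Tpow R H N,
      mapWord (augSplit counit u) N w ∘ₗ iterComul comul counit N =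
        J ∘ₗ deltaPow comul counit u #{i | w i = true}
  | 0, w => ⟨LinearMap.id, rfl⟩
  | N + 1, w => by
    induction w using Fin.consCases with
    | cons b w =>
    obtain ⟨J, hJ⟩ := exists_mapWord_comp_iterComul_eq_comp_deltaPow u N w
    have hmap : mapWord (augSplit counit u) (N + 1) (Fin.cons b w) ∘ₗ
        iterComul comul counit (N + 1) =
          map (augSplit counit u b) (J ∘ₗ deltaPow comul counit u #{i | w i = true}) ∘ₗ comul := by
      rw [mapWord_cons, iterComul_succ]
      change map (augSplit counit u b) (mapWord (augSplit counit u) N w) ∘ₗ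
        (iterComul (comul : H →ₗ[R] H ⊗[R] H) counit N).lTensor H ∘ₗ comul = _
      rw [← LinearMap.comp_assoc, LinearMap.map_comp_lTensor, hJ]
    cases b with
    | true =>
      rw [show #{i | (Fin.cons true w : Fin (N + 1) → Bool) i = true} = #{i | w i = true} + 1 by
        simp [Fin.card_filter_univ_succ]]
      refine ⟨J.lTensor H, ?_⟩
      rw [hmap, deltaPow_succ]
      exact congrArg (· ∘ₗ comul) (LinearMap.lTensor_comp_map H J _ _).symm
    | false =>
      rw [show #{i | (Fin.cons false w : Fin (N + 1) → Bool) i = true} = #{i | w i = true} by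
        simp [Fin.card_filter_univ_succ]]
      refine ⟨mk R H _ u ∘ₗ J, ?_⟩
      rw [hmap]
      exact map_toSpanSingleton_counit_comp_comul u _

variable {u : H} (hε : counit (R := R) u = 1) (hΔ : comul (R := R) u = u ⊗ₜ[R] u)
include hε hΔ

theorem map_eAug_comp_comul_comp_eAug {M : Type*} [AddCommGroup M] [Module R M]
    (g : H →ₗ[R] M) (hg : g u = 0) :
    map (eAug counit u) g ∘ₗ comul ∘ₗ eAug counit u = map (eAug counit u) g ∘ₗ comul := by
  ext x
  simp [eAug, hΔ, hε, hg]

theorem exists_deltaPow_add_two_eq_comp : ∀ j : ℕ,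
    ∃ F : Tpow R H (j + 1) →ₗ[R] Tpow R H (j + 2),
      deltaPow comul counit u (j + 2) = F ∘ₗ deltaPow comul counit u (j + 1)
  | 0 => by
    refine ⟨map (eAug counit u) (deltaPow comul counit u 1) ∘ₗ comul ∘ₗ
      (TensorProduct.rid R H).toLinearMap, ?_⟩
    have hu : deltaPow (comul : H →ₗ[R] H ⊗[R] H) counit u 1 u = 0 := by
      change eAug counit u u ⊗ₜ[R] (1 : R) = 0
      rw [eAug_apply_self hε, zero_tmul]
    have hρ : (TensorProduct.rid R H).toLinearMap ∘ₗ deltaPow comul counit u 1 = eAug counit u := by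
      ext x
      change TensorProduct.rid R H (eAug counit u x ⊗ₜ[R] (1 : R)) = _
      simp
    rw [deltaPow_succ u 1, ← map_eAug_comp_comul_comp_eAug hε hΔ _ hu, ← hρ]
    rfl
  | j + 1 => by
    obtain ⟨F, hF⟩ := exists_deltaPow_add_two_eq_comp j
    refine ⟨F.lTensor H, ?_⟩
    rw [deltaPow_succ u (j + 2)]
    conv_rhs => rw [deltaPow_succ u (j + 1)]
    rw [hF]
    exact congrArg (· ∘ₗ comul) (LinearMap.lTensor_comp_map H F _ _).symm

theorem corad_mono : Monotone (corad (comul : H →ₗ[R] H ⊗[R] H) counit u) := by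
  refine monotone_nat_of_le_succ fun n x hx => ?_
  obtain ⟨F, hF⟩ := exists_deltaPow_add_two_eq_comp hε hΔ n
  simp_all [corad, LinearMap.mem_ker]

theorem mapWord_augSplit_iterComul_eq_zero {n N : ℕ} {w : Fin N → Bool}
    (hw : n < #{i | w i = true}) {x : H} (hx : x ∈ corad (comul : H →ₗ[R] H ⊗[R] H) counit u n) :
    mapWord (augSplit counit u) N w (iterComul (comul : H →ₗ[R] H ⊗[R] H) counit N x) = 0 := by
  obtain ⟨J, hJ⟩ := exists_mapWord_comp_iterComul_eq_comp_deltaPow (R := R) u N w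
  obtain ⟨k, hk⟩ := Nat.exists_eq_add_of_lt hw
  have hδ : deltaPow (comul : H →ₗ[R] H ⊗[R] H) counit u #{i | w i = true} x = 0 := by
    rw [hk]
    exact corad_mono hε hΔ (Nat.le_add_right n k) hx
  rw [← LinearMap.comp_apply, hJ, LinearMap.comp_apply, hδ, map_zero]

end Coradical

section TensorCoradical

variable {H₁ H₂ : Type u} [AddCommGroup H₁] [Module R H₁] [AddCommGroup H₂] [Module R H₂]

-- `(x₁ ⊗ … ⊗ x_N) ⊗ (y₁ ⊗ … ⊗ y_N) ↦ (x₁ ⊗ y₁) ⊗ … ⊗ (x_N ⊗ y_N)`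
def zipTpow : (N : ℕ) → Tpow R H₁ N ⊗[R] Tpow R H₂ N →ₗ[R] Tpow R (H₁ ⊗[R] H₂) N
  | 0 => (TensorProduct.lid R R).toLinearMap
  | N + 1 => (zipTpow N).lTensor (H₁ ⊗[R] H₂) ∘ₗ
      (tensorTensorTensorComm R H₁ (Tpow R H₁ N) H₂ (Tpow R H₂ N)).toLinearMap

theorem zipTpow_comp_map_mapWord {ι : Type*} (c₁ : ι → Module.End R H₁)
    (c₂ : ι → Module.End R H₂) : ∀ (N : ℕ) (g : Fin N → ι),
    zipTpow N ∘ₗ map (mapWord c₁ N g) (mapWord c₂ N g) =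
      mapWord (fun i => map (c₁ i) (c₂ i)) N g ∘ₗ zipTpow N
  | 0, _ => ext' fun _ _ => rfl
  | N + 1, g => by
    induction g using Fin.consCases with
    | cons i g =>
    rw [mapWord_cons, mapWord_cons, mapWord_cons]
    change (zipTpow N).lTensor (H₁ ⊗[R] H₂) ∘ₗ
        (tensorTensorTensorComm R H₁ (Tpow R H₁ N) H₂ (Tpow R H₂ N)).toLinearMap ∘ₗ
          map (map (c₁ i) (mapWord c₁ N g)) (map (c₂ i) (mapWord c₂ N g)) =
      map (map (c₁ i) (c₂ i)) (mapWord (fun i => map (c₁ i) (c₂ i)) N g) ∘ₗ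
        (zipTpow N).lTensor (H₁ ⊗[R] H₂) ∘ₗ
          (tensorTensorTensorComm R H₁ (Tpow R H₁ N) H₂ (Tpow R H₂ N)).toLinearMap
    rw [tensorTensorTensorComm_comp_map, ← LinearMap.comp_assoc, LinearMap.lTensor_comp_map,
      zipTpow_comp_map_mapWord c₁ c₂ N g, ← LinearMap.map_comp_lTensor, LinearMap.comp_assoc]

theorem map_lTensor_comp_comul {M₁ M₂ : Type*} [AddCommGroup M₁] [Module R M₁]
    [AddCommGroup M₂] [Module R M₂] (Δ₁ : H₁ →ₗ[R] H₁ ⊗[R] H₁) (Δ₂ : H₂ →ₗ[R] H₂ ⊗[R] H₂)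
    (f₁ : H₁ →ₗ[R] M₁) (f₂ : H₂ →ₗ[R] M₂) :
    (tensorTensorTensorComm R H₁ M₁ H₂ M₂).toLinearMap ∘ₗ
        map (f₁.lTensor H₁ ∘ₗ Δ₁) (f₂.lTensor H₂ ∘ₗ Δ₂) =
      (map f₁ f₂).lTensor (H₁ ⊗[R] H₂) ∘ₗ tensorComul Δ₁ Δ₂ := by
  rw [tensorComul, map_comp, ← LinearMap.comp_assoc, LinearMap.lTensor_def, LinearMap.lTensor_def,
    tensorTensorTensorComm_comp_map, map_id, LinearMap.comp_assoc]
  rfl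

-- `id − p₁ ⊗ p₂ = (e₁ + p₁) ⊗ (e₂ + p₂) − p₁ ⊗ p₂` with `p = η ∘ ε`; the letters `k = 0, 1, 2`
-- stand for `e₁ ⊗ e₂`, `p₁ ⊗ e₂`, `e₁ ⊗ p₂`.
theorem eAug_tensorCounit (ε₁ : H₁ →ₗ[R] R) (ε₂ : H₂ →ₗ[R] R) (u₁ : H₁) (u₂ : H₂) :
    eAug (tensorCounit ε₁ ε₂) (u₁ ⊗ₜ[R] u₂) =
      ∑ k : Fin 3, map (augSplit ε₁ u₁ (k ≠ 1)) (augSplit ε₂ u₂ (k ≠ 2)) := by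
  refine ext' fun x y => ?_
  simp only [eAug, tensorCounit, LinearMap.sub_apply, LinearMap.id_coe, id_eq,
    LinearMap.coe_comp, LinearEquiv.coe_coe, Function.comp_apply, map_tmul, lid_tmul, smul_eq_mul,
    LinearMap.toSpanSingleton_apply, augSplit, ne_eq, decide_not, Fin.sum_univ_three,
    zero_ne_one, decide_false, Bool.not_false, Fin.reduceEq, decide_true, Bool.not_true,
    LinearMap.add_apply, tmul_sub, sub_tmul, ← smul_tmul', tmul_smul]
  module

variable [Coalgebra R H₁] [Coalgebra R H₂]

theorem tensorComul_comul :
    tensorComul (comul : H₁ →ₗ[R] H₁ ⊗[R] H₁) (comul : H₂ →ₗ[R] H₂ ⊗[R] H₂) = comul :=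
  ext' fun _ _ => rfl

theorem tensorCounit_counit :
    tensorCounit (counit : H₁ →ₗ[R] R) (counit : H₂ →ₗ[R] R) = counit :=
  ext' fun _ _ => by simp [tensorCounit, mul_comm]

theorem iterComul_tensorComul : ∀ N : ℕ,
    iterComul (tensorComul (comul : H₁ →ₗ[R] H₁ ⊗[R] H₁) (comul : H₂ →ₗ[R] H₂ ⊗[R] H₂))
        (tensorCounit counit counit) N =
      zipTpow N ∘ₗ map (iterComul comul counit N) (iterComul comul counit N)
  | 0 => rfl
  | N + 1 => by
    rw [tensorComul_comul, tensorCounit_counit, iterComul_succ,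
      iterComul_succ, iterComul_succ, ← tensorComul_comul, ← tensorCounit_counit,
      iterComul_tensorComul N, LinearMap.lTensor_comp, LinearMap.comp_assoc,
      ← map_lTensor_comp_comul]
    rfl

theorem deltaPow_tensor_tmul (u₁ : H₁) (u₂ : H₂) (N : ℕ) (a : H₁) (b : H₂) :
    deltaPow (tensorComul (comul : H₁ →ₗ[R] H₁ ⊗[R] H₁) (comul : H₂ →ₗ[R] H₂ ⊗[R] H₂))
        (tensorCounit counit counit) (u₁ ⊗ₜ[R] u₂) N (a ⊗ₜ[R] b) =
      ∑ g : Fin N → Fin 3, zipTpow N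
        (mapWord (augSplit counit u₁) N (fun i => g i ≠ 1) (iterComul comul counit N a) ⊗ₜ[R]
          mapWord (augSplit counit u₂) N (fun i => g i ≠ 2) (iterComul comul counit N b)) := by
  change mapPow _ N (iterComul _ _ N (a ⊗ₜ[R] b)) = _
  rw [iterComul_tensorComul, eAug_tensorCounit, mapPow_sum, LinearMap.sum_apply]
  refine sum_congr rfl fun g _ => ?_
  rw [← LinearMap.comp_apply, ← LinearMap.comp_assoc, ← zipTpow_comp_map_mapWord]
  simp only [LinearMap.comp_apply, map_tmul, mapWord_comp]

end TensorCoradical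

theorem Finset.lt_card_filter_ne_or_lt_card_filter_ne {α β : Type*} [Fintype α] [DecidableEq β]
    (g : α → β) {b₁ b₂ : β} (hb : b₁ ≠ b₂) {n m : ℕ} (h : n + m < Fintype.card α) :
    n < #{i | g i ≠ b₁} ∨ m < #{i | g i ≠ b₂} := by
  have hcard : Fintype.card α ≤ #{i | g i ≠ b₁} + #{i | g i ≠ b₂} := by
    rw [← card_univ, ← card_filter_add_card_filter_not (s := univ) fun i => g i ≠ b₁]
    gcongr with i
    exact fun h₂ h₁ => hb (h₁.symm.trans h₂)
  omega

theorem stmt2 {R : Type u} [CommRing R]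
    {H₁ H₂ : Type u} [AddCommGroup H₁] [Module R H₁] [AddCommGroup H₂] [Module R H₂]
    [Coalgebra R H₁] [Coalgebra R H₂] (u₁ : H₁) (u₂ : H₂)
    (hεu₁ : Coalgebra.counit (R := R) (A := H₁) u₁ = 1)
    (hΔu₁ : Coalgebra.comul (R := R) (A := H₁) u₁ = u₁ ⊗ₜ[R] u₁)
    (hεu₂ : Coalgebra.counit (R := R) (A := H₂) u₂ = 1)
    (hΔu₂ : Coalgebra.comul (R := R) (A := H₂) u₂ = u₂ ⊗ₜ[R] u₂)
    (n m : ℕ) (a : H₁) (b : H₂)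
    (ha : a ∈ corad (Coalgebra.comul (R := R) (A := H₁))
      (Coalgebra.counit (R := R) (A := H₁)) u₁ n)
    (hb : b ∈ corad (Coalgebra.comul (R := R) (A := H₂))
      (Coalgebra.counit (R := R) (A := H₂)) u₂ m) :
    a ⊗ₜ[R] b ∈ corad
      (tensorComul (Coalgebra.comul (R := R) (A := H₁)) (Coalgebra.comul (R := R) (A := H₂)))
      (tensorCounit (Coalgebra.counit (R := R) (A := H₁)) (Coalgebra.counit (R := R) (A := H₂)))
      (u₁ ⊗ₜ[R] u₂) (n + m) := by
  rw [corad, LinearMap.mem_ker, deltaPow_tensor_tmul]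
  refine Finset.sum_eq_zero fun g _ => ?_
  rcases Finset.lt_card_filter_ne_or_lt_card_filter_ne g (by decide : (1 : Fin 3) ≠ 2)
    (by simp : n + m < Fintype.card (Fin (n + m + 1))) with h | h
  · rw [mapWord_augSplit_iterComul_eq_zero hεu₁ hΔu₁ (by simpa using h) ha, zero_tmul, map_zero]
  · rw [mapWord_augSplit_iterComul_eq_zero hεu₂ hΔu₂ (by simpa using h) hb, tmul_zero, map_zero]
end
end

section
/- Let k be a field of characteristic zero and H a finite-dimensional bialgebra over k. Then P_n(H) = k·1_H for every n ∈ ℕ. In particular, H is conilpotent if and only if H = k·1_H (i.e. dim_k H = 1). -/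
open TensorProduct

noncomputable section

universe u

variable (R : Type u) [CommRing R]

variable {R}
variable {H : Type u} [AddCommGroup H] [Module R H]

/-! Write `Δ̄ = (e_H ⊗ e_H) ∘ Δ` for the reduced comultiplication. Up to associativity
`δ^{n+2} = (Δ̄ ⊗ id) ∘ δ^{n+1}`, and `δ^{n+1}` takes values in `im e_H ⊗ H^{⊗n}`, so
`P_{n+1} ⊆ P_n` as soon as `ker Δ̄ ⊆ ker e_H`. If `Δ̄ x = 0`, then `z = e_H x` is primitive,
and in characteristic zero a primitive element of a finite-dimensional bialgebra lies in `k·1`: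
if `deg (minpoly z) = e + 1`, choose a functional `φ` killing `1, z, …, z^(e-1)` but not `z^e`;
applying `x ↦ φ(x₁) x₂` to the minimal polynomial relation leaves
`(e + 1) φ(z^e) z ∈ k·1`.
Hence `P_n = P_0 = k·1` for all `n`. -/

theorem exists_dual_pow_ne_zero_of_lt_natDegree {k S : Type*} [Field k] [Ring S] [Algebra k S]
    (z : S) {e : ℕ} (he : e < (minpoly k z).natDegree) :
    ∃ φ : S →ₗ[k] k, φ (z ^ e) ≠ 0 ∧ ∀ m < e, φ (z ^ m) = 0 := by
  have hnot := (linearIndependent_pow (K := k) z).notMem_span_image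
    (s := {j | (j : ℕ) < e}) (x := ⟨e, he⟩) (lt_irrefl e)
  obtain ⟨φ, hφe, hφ⟩ := Submodule.exists_le_ker_of_notMem hnot
  exact ⟨φ, hφe, fun m hm => hφ (Submodule.subset_span ⟨⟨m, hm.trans he⟩, hm, rfl⟩)⟩

theorem LinearMap.exists_eq_comp_of_ker_le {K V W U : Type*} [Field K] [AddCommGroup V]
    [AddCommGroup W] [AddCommGroup U] [Module K V] [Module K W] [Module K U]
    (f : V →ₗ[K] W) (g : V →ₗ[K] U) (h : LinearMap.ker f ≤ LinearMap.ker g) :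
    ∃ s : W →ₗ[K] U, g = s ∘ₗ f := by
  obtain ⟨l, hl⟩ := ((LinearMap.ker f).liftQ f le_rfl).exists_leftInverse_of_injective
    (Submodule.ker_liftQ_eq_bot _ _ _ le_rfl)
  refine ⟨(LinearMap.ker f).liftQ g h ∘ₗ l, LinearMap.ext fun v => ?_⟩
  have hv := LinearMap.congr_fun hl ((LinearMap.ker f).mkQ v)
  simp only [LinearMap.comp_apply, Submodule.mkQ_apply, Submodule.liftQ_apply,
    LinearMap.id_apply] at hv ⊢
  rw [hv, Submodule.liftQ_apply]

section Augmentation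

variable (R : Type u) [CommRing R] (H : Type u) [Ring H] [Bialgebra R H]

def augProj : H →ₗ[R] H := eAug Coalgebra.counit (1 : H)

def unitCounit : H →ₗ[R] H := LinearMap.toSpanSingleton R H 1 ∘ₗ Coalgebra.counit

def reducedComul : H →ₗ[R] H ⊗[R] H :=
  TensorProduct.map (augProj R H) (augProj R H) ∘ₗ Coalgebra.comul

variable {R H}

theorem augProj_apply (x : H) : augProj R H x = x - Coalgebra.counit (R := R) x • 1 := by
  simp [augProj, eAug]

theorem unitCounit_apply (x : H) : unitCounit R H x = Coalgebra.counit (R := R) x • 1 := rfl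

theorem augProj_add_unitCounit : augProj R H + unitCounit R H = LinearMap.id := by
  ext x
  simp [augProj_apply, unitCounit_apply]

@[simp]
theorem augProj_one : augProj R H 1 = 0 := by
  simp [augProj_apply]

@[simp]
theorem counit_augProj (x : H) : Coalgebra.counit (R := R) (augProj R H x) = 0 := by
  simp [augProj_apply]

@[simp]
theorem augProj_augProj (x : H) : augProj R H (augProj R H x) = augProj R H x := by
  rw [augProj_apply (augProj R H x), counit_augProj, zero_smul, sub_zero]

theorem ker_augProj : LinearMap.ker (augProj R H) = Submodule.span R {1} := by
  ext x
  rw [LinearMap.mem_ker, augProj_apply, sub_eq_zero, Submodule.mem_span_singleton]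
  refine ⟨fun h => ⟨_, h.symm⟩, ?_⟩
  rintro ⟨r, rfl⟩
  simp

theorem reducedComul_comp_augProj : reducedComul R H ∘ₗ augProj R H = reducedComul R H := by
  ext x
  simp [reducedComul, augProj_apply x, Algebra.TensorProduct.one_def]

theorem map_unitCounit_right_comul (f : H →ₗ[R] H) (x : H) :
    TensorProduct.map f (unitCounit R H) (Coalgebra.comul x) = f x ⊗ₜ 1 := by
  rw [unitCounit, ← LinearMap.map_lTensor, Coalgebra.lTensor_counit_comul]
  simp

theorem map_unitCounit_left_comul (g : H →ₗ[R] H) (x : H) :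
    TensorProduct.map (unitCounit R H) g (Coalgebra.comul x) = 1 ⊗ₜ g x := by
  rw [unitCounit, ← LinearMap.map_rTensor, Coalgebra.rTensor_counit_comul]
  simp

theorem comul_augProj (x : H) :
    Coalgebra.comul (augProj R H x) =
      reducedComul R H x + augProj R H x ⊗ₜ 1 + 1 ⊗ₜ augProj R H x := by
  have hsplit : Coalgebra.comul (R := R) x =
      TensorProduct.map (augProj R H + unitCounit R H) (augProj R H + unitCounit R H)
        (Coalgebra.comul x) := by
    rw [augProj_add_unitCounit, TensorProduct.map_id, LinearMap.id_apply]
  simp only [TensorProduct.map_add_left, TensorProduct.map_add_right, LinearMap.add_apply,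
    map_unitCounit_right_comul, map_unitCounit_left_comul] at hsplit
  have hunit : Coalgebra.comul (R := R) (unitCounit R H x) = unitCounit R H x ⊗ₜ 1 := by
    simp [unitCounit_apply, Algebra.TensorProduct.one_def, TensorProduct.smul_tmul']
  have hx : augProj R H x = x - unitCounit R H x := by rw [augProj_apply, unitCounit_apply]
  rw [hx, map_sub, hunit, hsplit, ← hx, reducedComul, LinearMap.comp_apply]
  abel

end Augmentation

section DeltaPow

variable {R : Type u} [CommRing R] {H : Type u} [Ring H] [Bialgebra R H]

theorem map_augProj_assoc_rTensor_comul {T : Type u} [AddCommGroup T] [Module R T]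
    (P : T →ₗ[R] T) (w : H ⊗[R] T) :
    TensorProduct.map (augProj R H) (TensorProduct.map (augProj R H) P)
        (TensorProduct.assoc R H H T (Coalgebra.comul.rTensor T w)) =
      TensorProduct.assoc R H H T
        ((reducedComul R H).rTensor T (TensorProduct.map (augProj R H) P w)) := by
  rw [TensorProduct.map_map_assoc, LinearMap.map_rTensor, LinearMap.rTensor_map,
    reducedComul_comp_augProj, reducedComul]

theorem deltaPow_one_apply (x : H) :
    deltaPow (R := R) Coalgebra.comul Coalgebra.counit (1 : H) 1 x =
      (augProj R H x ⊗ₜ (1 : R) : H ⊗[R] R) :=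
  TensorProduct.map_tmul _ _ x (1 : R)

theorem deltaPow_add_two_apply (n : ℕ) (x : H) :
    deltaPow (R := R) Coalgebra.comul Coalgebra.counit (1 : H) (n + 2) x =
      TensorProduct.assoc R H H (Tpow R H n) ((reducedComul R H).rTensor (Tpow R H n)
        (deltaPow (R := R) Coalgebra.comul Coalgebra.counit (1 : H) (n + 1) x)) :=
  map_augProj_assoc_rTensor_comul _ _

theorem deltaPow_succ_apply_one (n : ℕ) :
    deltaPow (R := R) Coalgebra.comul Coalgebra.counit (1 : H) (n + 1) 1 = 0 := by
  induction n with
  | zero => exact (deltaPow_one_apply 1).trans (by rw [augProj_one, TensorProduct.zero_tmul]; rfl)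
  | succ n ih =>
    have ih' : (deltaPow (R := R) Coalgebra.comul Coalgebra.counit (1 : H) (n + 1) 1 :
        H ⊗[R] Tpow R H n) = (0 : H ⊗[R] Tpow R H n) := ih
    rw [deltaPow_add_two_apply, ih', map_zero, map_zero]
    rfl

theorem corad_zero : corad (R := R) Coalgebra.comul Coalgebra.counit (1 : H) 0 =
    Submodule.span R {1} := by
  ext x
  rw [corad, LinearMap.mem_ker, deltaPow_one_apply, ← ker_augProj, LinearMap.mem_ker,
    ← TensorProduct.rid_symm_apply]
  exact (TensorProduct.rid R H).symm.map_eq_zero_iff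

theorem span_one_le_corad (n : ℕ) :
    Submodule.span R {1} ≤ corad (R := R) Coalgebra.comul Coalgebra.counit (1 : H) n := by
  rw [Submodule.span_le, Set.singleton_subset_iff]
  exact deltaPow_succ_apply_one n

end DeltaPow

section Primitive

variable {R : Type u} [CommRing R] {H : Type u} [Ring H] [Bialgebra R H]

variable (R) in
def IsPrimitiveElement (z : H) : Prop :=
  Coalgebra.comul (R := R) z = z ⊗ₜ 1 + 1 ⊗ₜ z

theorem IsPrimitiveElement.comul_pow {z : H} (hz : IsPrimitiveElement R z) (n : ℕ) :
    Coalgebra.comul (R := R) (z ^ n) =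
      ∑ m ∈ Finset.range (n + 1), (n.choose m : R) • ((z ^ m) ⊗ₜ[R] (z ^ (n - m))) := by
  have hcomm : Commute (z ⊗ₜ[R] (1 : H)) (1 ⊗ₜ z) := by
    simp [Commute, SemiconjBy, Algebra.TensorProduct.tmul_mul_tmul]
  rw [← Bialgebra.comulAlgHom_apply, map_pow, Bialgebra.comulAlgHom_apply, hz, hcomm.add_pow]
  refine Finset.sum_congr rfl fun m _ => ?_
  rw [Algebra.TensorProduct.tmul_pow, Algebra.TensorProduct.tmul_pow, one_pow, one_pow,
    Algebra.TensorProduct.tmul_mul_tmul, mul_one, one_mul, ← Nat.cast_comm, ← nsmul_eq_mul,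
    Nat.cast_smul_eq_nsmul]

def rightHit (φ : H →ₗ[R] R) : H →ₗ[R] H :=
  (TensorProduct.lid R H).toLinearMap ∘ₗ φ.rTensor H ∘ₗ Coalgebra.comul

theorem IsPrimitiveElement.rightHit_pow {z : H} (hz : IsPrimitiveElement R z) (φ : H →ₗ[R] R)
    (n : ℕ) : rightHit φ (z ^ n) =
      ∑ m ∈ Finset.range (n + 1), ((n.choose m : R) * φ (z ^ m)) • z ^ (n - m) := by
  simp only [rightHit, LinearMap.comp_apply, hz.comul_pow, map_sum, map_smul,
    LinearMap.rTensor_tmul, LinearEquiv.coe_coe, TensorProduct.lid_tmul, smul_smul]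

theorem IsPrimitiveElement.rightHit_pow_of_lt {z : H} (hz : IsPrimitiveElement R z)
    {φ : H →ₗ[R] R} {e : ℕ} (hφ : ∀ m < e, φ (z ^ m) = 0) {i : ℕ} (hi : i < e) :
    rightHit φ (z ^ i) = 0 := by
  rw [hz.rightHit_pow]
  refine Finset.sum_eq_zero fun m hm => ?_
  rw [hφ m ((Finset.mem_range_succ_iff.mp hm).trans_lt hi), mul_zero, zero_smul]

theorem IsPrimitiveElement.rightHit_pow_self {z : H} (hz : IsPrimitiveElement R z)
    {φ : H →ₗ[R] R} {e : ℕ} (hφ : ∀ m < e, φ (z ^ m) = 0) :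
    rightHit φ (z ^ e) = φ (z ^ e) • 1 := by
  have hlow : ∑ m ∈ Finset.range e, ((e.choose m : R) * φ (z ^ m)) • z ^ (e - m) = 0 :=
    Finset.sum_eq_zero fun m hm => by rw [hφ m (Finset.mem_range.mp hm), mul_zero, zero_smul]
  rw [hz.rightHit_pow, Finset.sum_range_succ, hlow, Nat.choose_self, Nat.sub_self]
  simp

theorem IsPrimitiveElement.rightHit_pow_succ_self {z : H} (hz : IsPrimitiveElement R z)
    {φ : H →ₗ[R] R} {e : ℕ} (hφ : ∀ m < e, φ (z ^ m) = 0) :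
    rightHit φ (z ^ (e + 1)) = ((e + 1 : R) * φ (z ^ e)) • z + φ (z ^ (e + 1)) • 1 := by
  have hlow : ∑ m ∈ Finset.range e,
      (((e + 1).choose m : R) * φ (z ^ m)) • z ^ (e + 1 - m) = 0 :=
    Finset.sum_eq_zero fun m hm => by rw [hφ m (Finset.mem_range.mp hm), mul_zero, zero_smul]
  rw [hz.rightHit_pow, Finset.sum_range_succ, Finset.sum_range_succ, hlow,
    Nat.choose_succ_self_right, Nat.choose_self, Nat.add_sub_cancel_left, Nat.sub_self]
  simp

end Primitive

section Field

variable {k : Type u} [Field k] [CharZero k] {H : Type u} [Ring H] [Bialgebra k H]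
  [Module.Finite k H]

theorem IsPrimitiveElement.mem_span_one {z : H} (hz : IsPrimitiveElement k z) :
    z ∈ Submodule.span k {1} := by
  have := Bialgebra.nontrivial k (A := H)
  obtain ⟨e, hd⟩ : ∃ e, (minpoly k z).natDegree = e + 1 :=
    Nat.exists_eq_add_one.mpr (minpoly.natDegree_pos (IsIntegral.of_finite k z))
  obtain ⟨φ, hφe, hφ⟩ :=
    exists_dual_pow_ne_zero_of_lt_natDegree (k := k) z (e := e) (by omega)
  have hmonic : (minpoly k z).coeff (e + 1) = 1 := by
    rw [← hd]; exact (minpoly.monic (IsIntegral.of_finite k z)).coeff_natDegree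
  -- only the terms of degree `e` and `e + 1` survive `rightHit φ`
  have hrel : (minpoly k z).coeff e • φ (z ^ e) • (1 : H) +
      (((e + 1 : k) * φ (z ^ e)) • z + φ (z ^ (e + 1)) • 1) = 0 := by
    have h0 := congrArg (rightHit φ) (minpoly.aeval k z)
    rw [Polynomial.aeval_eq_sum_range, hd, map_sum, map_zero, Finset.sum_range_succ,
      Finset.sum_range_succ, Finset.sum_eq_zero fun i hi => by
        rw [map_smul, hz.rightHit_pow_of_lt hφ (Finset.mem_range.mp hi), smul_zero],
      map_smul, map_smul, hz.rightHit_pow_self hφ, hz.rightHit_pow_succ_self hφ, hmonic,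
      one_smul, zero_add] at h0
    exact h0
  have hne : (e + 1 : k) * φ (z ^ e) ≠ 0 := mul_ne_zero (Nat.cast_add_one_ne_zero e) hφe
  rw [← Submodule.smul_mem_iff _ hne, Submodule.mem_span_singleton]
  exact ⟨-((minpoly k z).coeff e * φ (z ^ e) + φ (z ^ (e + 1))),
    by linear_combination (norm := module) -hrel⟩

theorem ker_reducedComul_le_ker_augProj :
    LinearMap.ker (reducedComul k H) ≤ LinearMap.ker (augProj k H) := by
  intro x hx
  have hprim : IsPrimitiveElement k (augProj k H x) := by
    rw [IsPrimitiveElement, comul_augProj, LinearMap.mem_ker.mp hx, zero_add, add_comm]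
  have hz := hprim.mem_span_one
  rwa [← ker_augProj, LinearMap.mem_ker, augProj_augProj] at hz

theorem map_augProj_eq_zero_of_rTensor_reducedComul {T : Type u} [AddCommGroup T] [Module k T]
    (P : T →ₗ[k] T) (w : H ⊗[k] T)
    (h : (reducedComul k H).rTensor T (TensorProduct.map (augProj k H) P w) = 0) :
    TensorProduct.map (augProj k H) P w = 0 := by
  obtain ⟨s, hs⟩ := (reducedComul k H).exists_eq_comp_of_ker_le (augProj k H)
    ker_reducedComul_le_ker_augProj
  have hidem : (augProj k H).rTensor T (TensorProduct.map (augProj k H) P w) =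
      TensorProduct.map (augProj k H) P w := by
    rw [LinearMap.rTensor_map]
    congr 2
    exact LinearMap.ext augProj_augProj
  have hfactor : (augProj k H).rTensor T = s.rTensor T ∘ₗ (reducedComul k H).rTensor T := by
    rw [hs, LinearMap.rTensor_comp]
  rw [← hidem, hfactor, LinearMap.comp_apply, h, map_zero]

theorem corad_succ_le (n : ℕ) :
    corad (R := k) Coalgebra.comul Coalgebra.counit (1 : H) (n + 1) ≤
      corad (R := k) Coalgebra.comul Coalgebra.counit (1 : H) n := by
  intro x hx
  rw [corad, LinearMap.mem_ker, deltaPow_add_two_apply] at hx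
  exact map_augProj_eq_zero_of_rTensor_reducedComul _ _
    ((TensorProduct.assoc k H H (Tpow k H n)).map_eq_zero_iff.mp hx)

theorem corad_eq_span_one (n : ℕ) :
    corad (R := k) Coalgebra.comul Coalgebra.counit (1 : H) n = Submodule.span k {1} := by
  induction n with
  | zero => exact corad_zero
  | succ n ih => exact le_antisymm ((corad_succ_le n).trans ih.le) (span_one_le_corad _)

end Field

/-- Over a field of characteristic zero, a finite-dimensional bialgebra `H` has
`P_n(H) = k·1_H` for all `n`; in particular `H` is conilpotent iff `H = k·1_H`. -/
theorem stmt11 {k : Type u} [Field k] [CharZero k] {H : Type u} [Ring H] [Bialgebra k H]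
    [Module.Finite k H] :
    (∀ n : ℕ, corad (Coalgebra.comul (R := k) (A := H))
        (Coalgebra.counit (R := k) (A := H)) (1 : H) n = Submodule.span k {(1 : H)}) ∧
    ((∀ x : H, ∃ n : ℕ, x ∈ corad (Coalgebra.comul (R := k) (A := H))
        (Coalgebra.counit (R := k) (A := H)) (1 : H) n)
      ↔ Submodule.span k {(1 : H)} = ⊤) := by
  refine ⟨corad_eq_span_one, fun h => eq_top_iff.mpr fun x _ => ?_, fun h x => ⟨0, ?_⟩⟩
  · obtain ⟨n, hn⟩ := h x
    rwa [corad_eq_span_one] at hn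
  · rw [corad_eq_span_one, h]
    trivial
end
end
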